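/- Gasper's split poised ${}_{10}\phi_9$ transformation: Let $n \ge 0$ be an integer and let $q, a, b, c, A, B, C$ be nonzero complex numbers such that all factors occurring in denominators below are nonzero. Then $\sum_{k=0}^{n} \frac{1-aq^{2k}}{1-a} \cdot \frac{(a;q)_k (b;q)_k (c;q)_k (a/(bc);q)_k \, (C/(Aq^n);q)_k (1/(BCq^n);q)_k (B/(Aq^n);q)_k (q^{-n};q)_k}{(q;q)_k (aq/b;q)_k (aq/c;q)_k (bcq;q)_k \, (1/(Cq^n);q)_k (BC/(Aq^n);q)_k (1/(Bq^n);q)_k (1/(Aq^n);q)_k} q^k = \frac{(aq,bq,cq,aq/(bc),Aq/B,Aq/C,BCq;q)_n}{(Aq,Bq,Cq,Aq/(BC),aq/b,aq/c,bcq;q)_n} \sum_{k=0}^{n} \frac{1-Aq^{2k}}{1-A} \cdot \frac{(A;q)_k (B;q)_k (C;q)_k (A/(BC);q)_k \, (c/(aq^n);q)_k (1/(bcq^n);q)_k (b/(aq^n);q)_k (q^{-n};q)_k}{(q;q)_k (Aq/B;q)_k (Aq/C;q)_k (BCq;q)_k \, (1/(cq^n);q)_k (bc/(aq^n);q)_k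 (1/(bq^n);q)_k (1/(aq^n);q)_k} q^k$. (The factor $(1-aq^{2k})/(1-a)$ encodes the well-poised parameters $qa^{1/2}, -qa^{1/2}$ over $a^{1/2}, -a^{1/2}$.) -/

import Mathlib

/-!
Write `t_k(a,b,c) = (1 - a q^{2k})/(1 - a) · (a,b,c,a/(bc);q)_k q^k / (q,aq/b,aq/c,bcq;q)_k` for the
very-well-poised term and `g_m(a,b,c) = (aq,bq,cq,aq/(bc);q)_m / (q,aq/b,aq/c,bcq;q)_m`. The partial
sums telescope: `∑_{k ≤ m} t_k = g_m`. Reversing q-shifted factorials, the eight factors of the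
summand that contain `q^{-n}` contribute exactly `g_{n-k}(A,B,C) / g_n(A,B,C)`: the powers of `A`
and `q` produced by the four reversals in the numerator and the four in the denominator agree.
Hence `g_n(A,B,C)` times the left side is `∑_{j+k ≤ n} t_k(a,b,c) t_j(A,B,C)`, which is symmetric
in the two parameter triples, while the prefactor is `g_n(a,b,c) / g_n(A,B,C)`.
-/

set_option autoImplicit false

/-- The q-shifted factorial `(a;q)_n = ∏_{j=0}^{n-1} (1 - a q^j)`. -/
noncomputable def qPoch (q a : ℂ) (n : ℕ) : ℂ := ∏ j ∈ Finset.range n, (1 - a * q ^ j)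

open Finset

@[simp]
theorem qPoch_zero (q a : ℂ) : qPoch q a 0 = 1 := prod_range_zero _

theorem qPoch_succ (q a : ℂ) (n : ℕ) : qPoch q a (n + 1) = qPoch q a n * (1 - a * q ^ n) :=
  prod_range_succ _ _

theorem qPoch_succ' (q a : ℂ) (n : ℕ) : qPoch q a (n + 1) = (1 - a) * qPoch q (a * q) n := by
  rw [qPoch, qPoch, prod_range_succ', mul_comm]
  simp only [pow_zero, mul_one, pow_succ', mul_assoc]

@[gcongr]
theorem qPoch_dvd_qPoch {q : ℂ} (a : ℂ) {j k : ℕ} (h : j ≤ k) : qPoch q a j ∣ qPoch q a k :=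
  prod_dvd_prod_of_subset _ _ _ (range_subset_range.mpr h)

/-- Reversal of a q-shifted factorial: with `y = 1 / (z q^(n-1))`, the factors `1 - y q^j`,
`j < k`, are the factors `1 - z q^i`, `n - k ≤ i < n`, up to the unit `-y q^j`. -/
theorem qPoch_mul_qPoch_sub {q y z : ℂ} {n : ℕ} (hq : q ≠ 0) (h : y * z * q ^ n = q) :
    ∀ k ≤ n, qPoch q y k * qPoch q z (n - k) = (-y) ^ k * q ^ k.choose 2 * qPoch q z n
  | 0, _ => by simp
  | k + 1, hk => by
    obtain ⟨m, rfl⟩ := Nat.exists_eq_add_of_le hk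
    have hyz : y * z * q ^ (k + m) = 1 := mul_right_cancel₀ hq (by linear_combination h)
    have ih := qPoch_mul_qPoch_sub hq h k (by omega)
    rw [show k + 1 + m - k = m + 1 by omega, qPoch_succ] at ih
    rw [show k + 1 + m - (k + 1) = m by omega, qPoch_succ, Nat.choose_succ_succ',
      Nat.choose_one_right]
    linear_combination (-y * q ^ k) * ih - qPoch q y k * qPoch q z m * hyz

theorem sum_range_mul_sum_range_sub_comm {R : Type*} [CommSemiring R] (f g : ℕ → R) (n : ℕ) :
    ∑ k ∈ range (n + 1), f k * ∑ j ∈ range (n - k + 1), g j =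
      ∑ k ∈ range (n + 1), g k * ∑ j ∈ range (n - k + 1), f j := by
  simp only [mul_sum]
  rw [sum_comm' (t' := range (n + 1)) (s' := fun j ↦ range (n - j + 1))
    (fun k j ↦ by simp only [mem_range]; omega)]
  simp only [mul_comm]

section WellPoised

variable {q a b c : ℂ}

noncomputable def wpCoeff (q a b c : ℂ) (k : ℕ) : ℂ :=
  qPoch q a k * qPoch q b k * qPoch q c k * qPoch q (a / (b * c)) k

noncomputable def wpNum (q a b c : ℂ) (k : ℕ) : ℂ :=
  qPoch q (a * q) k * qPoch q (b * q) k * qPoch q (c * q) k * qPoch q (a * q / (b * c)) k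

noncomputable def wpDen (q a b c : ℂ) (k : ℕ) : ℂ :=
  qPoch q q k * qPoch q (a * q / b) k * qPoch q (a * q / c) k * qPoch q (b * c * q) k

noncomputable def wpTerm (q a b c : ℂ) (k : ℕ) : ℂ :=
  (1 - a * q ^ (2 * k)) / (1 - a) * wpCoeff q a b c k * q ^ k / wpDen q a b c k

noncomputable def wpRatio (q a b c : ℂ) (k : ℕ) : ℂ := wpNum q a b c k / wpDen q a b c k

@[simp] theorem wpNum_zero (q a b c : ℂ) : wpNum q a b c 0 = 1 := by simp [wpNum]

@[simp] theorem wpDen_zero (q a b c : ℂ) : wpDen q a b c 0 = 1 := by simp [wpDen]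

theorem wpDen_dvd_wpDen {j k : ℕ} (h : j ≤ k) : wpDen q a b c j ∣ wpDen q a b c k := by
  unfold wpDen
  gcongr

theorem wpCoeff_succ (k : ℕ) :
    wpCoeff q a b c (k + 1) = (1 - a) * (1 - b) * (1 - c) * (1 - a / (b * c)) * wpNum q a b c k := by
  simp only [wpCoeff, wpNum, qPoch_succ', div_mul_eq_mul_div]
  ring

theorem wpNum_succ (k : ℕ) :
    wpNum q a b c (k + 1) = wpNum q a b c k * ((1 - a * q ^ (k + 1)) * (1 - b * q ^ (k + 1)) *
      (1 - c * q ^ (k + 1)) * (1 - a / (b * c) * q ^ (k + 1))) := by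
  simp only [wpNum, qPoch_succ]
  ring

theorem wpDen_succ (k : ℕ) :
    wpDen q a b c (k + 1) = wpDen q a b c k * ((1 - q ^ (k + 1)) * (1 - a / b * q ^ (k + 1)) *
      (1 - a / c * q ^ (k + 1)) * (1 - b * c * q ^ (k + 1))) := by
  simp only [wpDen, qPoch_succ]
  ring

theorem wpTerm_succ (hb : b ≠ 0) (hc : c ≠ 0) (ha : 1 - a ≠ 0) {k : ℕ}
    (hD : wpDen q a b c (k + 1) ≠ 0) :
    wpTerm q a b c (k + 1) = wpRatio q a b c (k + 1) - wpRatio q a b c k := by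
  have key (x : ℂ) : (1 - a * x ^ 2) * ((1 - b) * (1 - c) * (1 - a / (b * c))) * x =
      (1 - a * x) * (1 - b * x) * (1 - c * x) * (1 - a / (b * c) * x) -
        (1 - x) * (1 - a / b * x) * (1 - a / c * x) * (1 - b * c * x) := by
    field_simp
    ring
  rw [wpDen_succ] at hD
  rw [wpTerm, wpRatio, wpRatio, wpCoeff_succ, wpNum_succ, wpDen_succ,
    ← mul_div_mul_right (wpNum q a b c k) _ (right_ne_zero_of_mul hD), div_sub_div_same]
  congr 1
  rw [mul_comm 2, pow_mul]
  linear_combination wpNum q a b c k * key (q ^ (k + 1)) + (1 - b) * (1 - c) * (1 - a / (b * c)) *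
    wpNum q a b c k * q ^ (k + 1) * div_mul_cancel₀ (1 - a * (q ^ (k + 1)) ^ 2) ha

theorem sum_range_wpTerm (hb : b ≠ 0) (hc : c ≠ 0) (ha : 1 - a ≠ 0) :
    ∀ {m : ℕ}, wpDen q a b c m ≠ 0 → ∑ k ∈ range (m + 1), wpTerm q a b c k = wpRatio q a b c m
  | 0, _ => by simp [wpTerm, wpRatio, wpCoeff, ha]
  | m + 1, hD => by
    rw [sum_range_succ, sum_range_wpTerm hb hc ha (ne_zero_of_dvd_ne_zero hD
      (wpDen_dvd_wpDen m.le_succ)), wpTerm_succ hb hc ha hD, add_sub_cancel]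

end WellPoised

section Reversal

variable {q A B C : ℂ} {n : ℕ}

noncomputable def revNum (q A B C : ℂ) (n k : ℕ) : ℂ :=
  qPoch q (C / (A * q ^ n)) k * qPoch q (1 / (B * C * q ^ n)) k * qPoch q (B / (A * q ^ n)) k *
    qPoch q (q ^ (-(n : ℤ))) k

noncomputable def revDen (q A B C : ℂ) (n k : ℕ) : ℂ :=
  qPoch q (1 / (C * q ^ n)) k * qPoch q (B * C / (A * q ^ n)) k * qPoch q (1 / (B * q ^ n)) k *
    qPoch q (1 / (A * q ^ n)) k

theorem revDen_dvd_revDen {j k : ℕ} (h : j ≤ k) : revDen q A B C n j ∣ revDen q A B C n k := by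
  unfold revDen
  gcongr

theorem revNum_mul_wpDen_mul_wpNum (hq : q ≠ 0) (hA : A ≠ 0) (hB : B ≠ 0) (hC : C ≠ 0) {k : ℕ}
    (hk : k ≤ n) :
    revNum q A B C n k * wpDen q A B C (n - k) * wpNum q A B C n =
      revDen q A B C n k * wpNum q A B C (n - k) * wpDen q A B C n := by
  have rev {y z : ℂ} (h : y * z * q ^ n = q) := qPoch_mul_qPoch_sub hq h k hk
  have n1 := rev (y := C / (A * q ^ n)) (z := A * q / C) (by field_simp)
  have n2 := rev (y := 1 / (B * C * q ^ n)) (z := B * C * q) (by field_simp)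
  have n3 := rev (y := B / (A * q ^ n)) (z := A * q / B) (by field_simp)
  have n4 := rev (y := q ^ (-(n : ℤ))) (z := q) (by rw [zpow_neg, zpow_natCast]; field_simp)
  have d1 := rev (y := 1 / (C * q ^ n)) (z := C * q) (by field_simp)
  have d2 := rev (y := B * C / (A * q ^ n)) (z := A * q / (B * C)) (by field_simp)
  have d3 := rev (y := 1 / (B * q ^ n)) (z := B * q) (by field_simp)
  have d4 := rev (y := 1 / (A * q ^ n)) (z := A * q) (by field_simp)
  have hy : (-(C / (A * q ^ n))) ^ k * (-(1 / (B * C * q ^ n))) ^ k * (-(B / (A * q ^ n))) ^ k *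
      (-q ^ (-(n : ℤ))) ^ k = (-(1 / (C * q ^ n))) ^ k * (-(B * C / (A * q ^ n))) ^ k *
      (-(1 / (B * q ^ n))) ^ k * (-(1 / (A * q ^ n))) ^ k := by
    simp only [← mul_pow]
    rw [zpow_neg, zpow_natCast]
    field_simp
  have hN := congr_arg₂ (· * ·) (congr_arg₂ (· * ·) (congr_arg₂ (· * ·) n1 n2) n3) n4
  have hD := congr_arg₂ (· * ·) (congr_arg₂ (· * ·) (congr_arg₂ (· * ·) d1 d2) d3) d4
  linear_combination (norm := skip) (q ^ k.choose 2) ^ 4 * wpDen q A B C n * wpNum q A B C n * hy +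
    wpNum q A B C n * hN - wpDen q A B C n * hD
  unfold revNum revDen wpNum wpDen
  ring

theorem wpNum_ne_zero_of_revDen_ne_zero (hq : q ≠ 0) (hA : A ≠ 0) (hB : B ≠ 0) (hC : C ≠ 0)
    (hR : revDen q A B C n n ≠ 0) (hD : wpDen q A B C n ≠ 0) : wpNum q A B C n ≠ 0 := by
  intro hN
  have h := revNum_mul_wpDen_mul_wpNum hq hA hB hC (le_refl n)
  simp only [Nat.sub_self, wpDen_zero, wpNum_zero, hN, mul_zero, mul_one] at h
  exact mul_ne_zero hR hD h.symm

theorem revNum_div_revDen (hq : q ≠ 0) (hA : A ≠ 0) (hB : B ≠ 0) (hC : C ≠ 0) {k : ℕ}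
    (hk : k ≤ n) (hR : revDen q A B C n n ≠ 0) (hD : wpDen q A B C n ≠ 0)
    (hN : wpNum q A B C n ≠ 0) :
    revNum q A B C n k / revDen q A B C n k = wpRatio q A B C (n - k) / wpRatio q A B C n := by
  have hRk := ne_zero_of_dvd_ne_zero hR (revDen_dvd_revDen hk)
  have hDk := ne_zero_of_dvd_ne_zero hD (wpDen_dvd_wpDen (n.sub_le k))
  rw [wpRatio, wpRatio, div_div_div_eq, div_eq_div_iff hRk (mul_ne_zero hDk hN)]
  linear_combination revNum_mul_wpDen_mul_wpNum hq hA hB hC hk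

end Reversal

section Split

variable {q a b c A B C : ℂ} {n : ℕ}

noncomputable def splitTerm (q a b c A B C : ℂ) (n k : ℕ) : ℂ :=
  (1 - a * q ^ (2 * k)) / (1 - a) *
    (qPoch q a k * qPoch q b k * qPoch q c k * qPoch q (a / (b * c)) k *
      qPoch q (C / (A * q ^ n)) k * qPoch q (1 / (B * C * q ^ n)) k *
      qPoch q (B / (A * q ^ n)) k * qPoch q (q ^ (-(n : ℤ))) k) * q ^ k /
    (qPoch q q k * qPoch q (a * q / b) k * qPoch q (a * q / c) k * qPoch q (b * c * q) k *
      qPoch q (1 / (C * q ^ n)) k * qPoch q (B * C / (A * q ^ n)) k *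
      qPoch q (1 / (B * q ^ n)) k * qPoch q (1 / (A * q ^ n)) k)

noncomputable def splitPrefactor (q a b c A B C : ℂ) (n : ℕ) : ℂ :=
  qPoch q (a * q) n * qPoch q (b * q) n * qPoch q (c * q) n * qPoch q (a * q / (b * c)) n *
      qPoch q (A * q / B) n * qPoch q (A * q / C) n * qPoch q (B * C * q) n /
    (qPoch q (A * q) n * qPoch q (B * q) n * qPoch q (C * q) n *
      qPoch q (A * q / (B * C)) n * qPoch q (a * q / b) n * qPoch q (a * q / c) n *
      qPoch q (b * c * q) n)

theorem splitTerm_eq (q a b c A B C : ℂ) (n k : ℕ) :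
    splitTerm q a b c A B C n k =
      wpTerm q a b c k * (revNum q A B C n k / revDen q A B C n k) := by
  simp only [splitTerm, wpTerm, wpCoeff, wpDen, revNum, revDen]
  ring

theorem sum_splitTerm (hq : q ≠ 0) (hA : A ≠ 0) (hB : B ≠ 0) (hC : C ≠ 0)
    (hR : revDen q A B C n n ≠ 0) (hD : wpDen q A B C n ≠ 0) (hN : wpNum q A B C n ≠ 0) :
    ∑ k ∈ range (n + 1), splitTerm q a b c A B C n k =
      (∑ k ∈ range (n + 1), wpTerm q a b c k * wpRatio q A B C (n - k)) / wpRatio q A B C n := by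
  rw [sum_div]
  refine sum_congr rfl fun k hk ↦ ?_
  rw [splitTerm_eq, revNum_div_revDen hq hA hB hC (Nat.lt_succ_iff.mp (mem_range.mp hk)) hR hD hN,
    mul_div_assoc]

theorem sum_wpTerm_mul_wpRatio_comm (hb : b ≠ 0) (hc : c ≠ 0) (hB : B ≠ 0) (hC : C ≠ 0)
    (ha : 1 - a ≠ 0) (hA : 1 - A ≠ 0) (hD : wpDen q a b c n ≠ 0) (hD' : wpDen q A B C n ≠ 0) :
    ∑ k ∈ range (n + 1), wpTerm q a b c k * wpRatio q A B C (n - k) =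
      ∑ k ∈ range (n + 1), wpTerm q A B C k * wpRatio q a b c (n - k) := by
  have partial_sums {a b c : ℂ} (hb : b ≠ 0) (hc : c ≠ 0) (ha : 1 - a ≠ 0)
      (hD : wpDen q a b c n ≠ 0) (k : ℕ) :
      wpRatio q a b c (n - k) = ∑ j ∈ range (n - k + 1), wpTerm q a b c j :=
    (sum_range_wpTerm hb hc ha (ne_zero_of_dvd_ne_zero hD (wpDen_dvd_wpDen (n.sub_le k)))).symm
  simp only [partial_sums hb hc ha hD, partial_sums hB hC hA hD']
  exact sum_range_mul_sum_range_sub_comm _ _ n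

theorem splitPrefactor_eq (hq : qPoch q q n ≠ 0) :
    splitPrefactor q a b c A B C n = wpRatio q a b c n / wpRatio q A B C n := by
  rw [wpRatio, wpRatio, div_div_div_eq, splitPrefactor, ← mul_div_mul_left _ _ hq]
  congr 1 <;> simp only [wpNum, wpDen] <;> ring

end Split

theorem gasper_split_poised_10phi9_general (n : ℕ) (q a b c A B C : ℂ) (hq : q ≠ 0) (ha : a ≠ 0)
    (hb : b ≠ 0) (hc : c ≠ 0) (hA : A ≠ 0) (hB : B ≠ 0) (hC : C ≠ 0)
    (h1a : 1 - a ≠ 0) (h1A : 1 - A ≠ 0)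
    (hdenL : ∀ k ≤ n,
      qPoch q q k * qPoch q (a * q / b) k * qPoch q (a * q / c) k * qPoch q (b * c * q) k *
        qPoch q (1 / (C * q ^ n)) k * qPoch q (B * C / (A * q ^ n)) k *
        qPoch q (1 / (B * q ^ n)) k * qPoch q (1 / (A * q ^ n)) k ≠ 0)
    (hdenR : ∀ k ≤ n,
      qPoch q q k * qPoch q (A * q / B) k * qPoch q (A * q / C) k * qPoch q (B * C * q) k *
        qPoch q (1 / (c * q ^ n)) k * qPoch q (b * c / (a * q ^ n)) k *
        qPoch q (1 / (b * q ^ n)) k * qPoch q (1 / (a * q ^ n)) k ≠ 0) :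
    ∑ k ∈ Finset.range (n + 1),
      (1 - a * q ^ (2 * k)) / (1 - a) *
        (qPoch q a k * qPoch q b k * qPoch q c k * qPoch q (a / (b * c)) k *
          qPoch q (C / (A * q ^ n)) k * qPoch q (1 / (B * C * q ^ n)) k *
          qPoch q (B / (A * q ^ n)) k * qPoch q (q ^ (-(n : ℤ))) k) * q ^ k /
        (qPoch q q k * qPoch q (a * q / b) k * qPoch q (a * q / c) k * qPoch q (b * c * q) k *
          qPoch q (1 / (C * q ^ n)) k * qPoch q (B * C / (A * q ^ n)) k *
          qPoch q (1 / (B * q ^ n)) k * qPoch q (1 / (A * q ^ n)) k)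
    = qPoch q (a * q) n * qPoch q (b * q) n * qPoch q (c * q) n * qPoch q (a * q / (b * c)) n *
        qPoch q (A * q / B) n * qPoch q (A * q / C) n * qPoch q (B * C * q) n /
      (qPoch q (A * q) n * qPoch q (B * q) n * qPoch q (C * q) n *
        qPoch q (A * q / (B * C)) n * qPoch q (a * q / b) n * qPoch q (a * q / c) n *
        qPoch q (b * c * q) n) *
      ∑ k ∈ Finset.range (n + 1),
        (1 - A * q ^ (2 * k)) / (1 - A) *
          (qPoch q A k * qPoch q B k * qPoch q C k * qPoch q (A / (B * C)) k *
            qPoch q (c / (a * q ^ n)) k * qPoch q (1 / (b * c * q ^ n)) k *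
            qPoch q (b / (a * q ^ n)) k * qPoch q (q ^ (-(n : ℤ))) k) * q ^ k /
          (qPoch q q k * qPoch q (A * q / B) k * qPoch q (A * q / C) k * qPoch q (B * C * q) k *
            qPoch q (1 / (c * q ^ n)) k * qPoch q (b * c / (a * q ^ n)) k *
            qPoch q (1 / (b * q ^ n)) k * qPoch q (1 / (a * q ^ n)) k) := by
  have hL : wpDen q a b c n * revDen q A B C n n ≠ 0 := by
    simpa only [wpDen, revDen, mul_assoc] using hdenL n le_rfl
  have hR : wpDen q A B C n * revDen q a b c n n ≠ 0 := by
    simpa only [wpDen, revDen, mul_assoc] using hdenR n le_rfl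
  obtain ⟨hDa, hRA⟩ := mul_ne_zero_iff.mp hL
  obtain ⟨hDA, hRa⟩ := mul_ne_zero_iff.mp hR
  have hNA := wpNum_ne_zero_of_revDen_ne_zero hq hA hB hC hRA hDA
  have hNa := wpNum_ne_zero_of_revDen_ne_zero hq ha hb hc hRa hDa
  have hqq : qPoch q q n ≠ 0 := left_ne_zero_of_mul (left_ne_zero_of_mul (left_ne_zero_of_mul hDa))
  have hGa : wpRatio q a b c n ≠ 0 := div_ne_zero hNa hDa
  change ∑ k ∈ range (n + 1), splitTerm q a b c A B C n k =
    splitPrefactor q a b c A B C n * ∑ k ∈ range (n + 1), splitTerm q A B C a b c n k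
  rw [sum_splitTerm hq hA hB hC hRA hDA hNA, sum_splitTerm hq ha hb hc hRa hDa hNa,
    sum_wpTerm_mul_wpRatio_comm hb hc hB hC h1a h1A hDa hDA, splitPrefactor_eq hqq,
    div_mul_div_comm, mul_comm (wpRatio q a b c n), mul_div_mul_right _ _ hGa]

/-- Gasper's split poised ₁₀φ₉ transformation. -/
theorem gasper_split_poised_10phi9 (n : ℕ) (q a b c A B C : ℂ) (hq : q ≠ 0) (ha : a ≠ 0)
    (hb : b ≠ 0) (hc : c ≠ 0) (hA : A ≠ 0) (hB : B ≠ 0) (hC : C ≠ 0)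
    (h1a : 1 - a ≠ 0) (h1A : 1 - A ≠ 0)
    (hdenL : ∀ k ≤ n,
      qPoch q q k * qPoch q (a * q / b) k * qPoch q (a * q / c) k * qPoch q (b * c * q) k *
        qPoch q (1 / (C * q ^ n)) k * qPoch q (B * C / (A * q ^ n)) k *
        qPoch q (1 / (B * q ^ n)) k * qPoch q (1 / (A * q ^ n)) k ≠ 0)
    (hdenR : ∀ k ≤ n,
      qPoch q q k * qPoch q (A * q / B) k * qPoch q (A * q / C) k * qPoch q (B * C * q) k *
        qPoch q (1 / (c * q ^ n)) k * qPoch q (b * c / (a * q ^ n)) k *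
        qPoch q (1 / (b * q ^ n)) k * qPoch q (1 / (a * q ^ n)) k ≠ 0)
    (hpre : qPoch q (A * q) n * qPoch q (B * q) n * qPoch q (C * q) n *
        qPoch q (A * q / (B * C)) n * qPoch q (a * q / b) n * qPoch q (a * q / c) n *
        qPoch q (b * c * q) n ≠ 0) :
    ∑ k ∈ Finset.range (n + 1),
      (1 - a * q ^ (2 * k)) / (1 - a) *
        (qPoch q a k * qPoch q b k * qPoch q c k * qPoch q (a / (b * c)) k *
          qPoch q (C / (A * q ^ n)) k * qPoch q (1 / (B * C * q ^ n)) k *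
          qPoch q (B / (A * q ^ n)) k * qPoch q (q ^ (-(n : ℤ))) k) * q ^ k /
        (qPoch q q k * qPoch q (a * q / b) k * qPoch q (a * q / c) k * qPoch q (b * c * q) k *
          qPoch q (1 / (C * q ^ n)) k * qPoch q (B * C / (A * q ^ n)) k *
          qPoch q (1 / (B * q ^ n)) k * qPoch q (1 / (A * q ^ n)) k)
    = qPoch q (a * q) n * qPoch q (b * q) n * qPoch q (c * q) n * qPoch q (a * q / (b * c)) n *
        qPoch q (A * q / B) n * qPoch q (A * q / C) n * qPoch q (B * C * q) n /
      (qPoch q (A * q) n * qPoch q (B * q) n * qPoch q (C * q) n *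
        qPoch q (A * q / (B * C)) n * qPoch q (a * q / b) n * qPoch q (a * q / c) n *
        qPoch q (b * c * q) n) *
      ∑ k ∈ Finset.range (n + 1),
        (1 - A * q ^ (2 * k)) / (1 - A) *
          (qPoch q A k * qPoch q B k * qPoch q C k * qPoch q (A / (B * C)) k *
            qPoch q (c / (a * q ^ n)) k * qPoch q (1 / (b * c * q ^ n)) k *
            qPoch q (b / (a * q ^ n)) k * qPoch q (q ^ (-(n : ℤ))) k) * q ^ k /
          (qPoch q q k * qPoch q (A * q / B) k * qPoch q (A * q / C) k * qPoch q (B * C * q) k *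
            qPoch q (1 / (c * q ^ n)) k * qPoch q (b * c / (a * q ^ n)) k *
            qPoch q (1 / (b * q ^ n)) k * qPoch q (1 / (a * q ^ n)) k) :=
  gasper_split_poised_10phi9_general n q a b c A B C hq ha hb hc hA hB hC h1a h1A hdenL hdenR
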